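/- arXiv:1104.2275 — 4 statements merged into one kernel-verified Lean document; each statement's English description precedes it below -/
import Mathlib

section
/- Let G be a finite simple graph on a finite vertex set V that admits a tree decomposition of width at most k, where k > 1. Let h be a height function on G-compatible data, i.e., a map h : V → ℕ, and let V1 and V2 be nonempty subsets of V, each inducing a connected subgraph of G, such that b − a ≥ k + 1, where a = max_{v∈V1} h(v) and b = min_{v∈V2} h(v). Assume the following level-separation property (which holds for the height function of a planar embedded graph): for every integer i with a < i < b there exists a nonempty set Y_i ⊆ {v ∈ V : h(v) = i} inducing a connected subgraph of G such that every walk in G from a vertex of V2 to a vertex u with h(u) < i contains a vertex of Y_i. Then there exists a set Y ⊆ V with |Y| ≤ k that strongly disconnects V1 and V2, i.e., Y ∩ (V1 ∪ V2) = ∅ and every walk in G from a vertex of V1 to a vertex of V2 contains a vertex of Y. -/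
open SimpleGraph

/-- A (finite-width) tree decomposition of a simple graph `G`:
`T` is a tree on node type `W` and `B` assigns a bag to each node, such that
every vertex lies in some bag, every edge is contained in some bag, and the
set of nodes whose bag contains a given vertex induces a connected subgraph
of `T`. -/
def IsTreeDecomp {V W : Type} (G : SimpleGraph V) (T : SimpleGraph W) (B : W → Set V) : Prop :=
  T.IsTree ∧ (∀ v, ∃ w, v ∈ B w) ∧ (∀ u v, G.Adj u v → ∃ w, u ∈ B w ∧ v ∈ B w) ∧
    ∀ v : V, (T.induce {w | v ∈ B w}).Connected

/-- `S` meets every walk of `G` from a vertex of `A` to a vertex of `B`. -/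
def SeparatesWalks {V : Type} (G : SimpleGraph V) (A B S : Set V) : Prop :=
  ∀ a ∈ A, ∀ b ∈ B, ∀ p : G.Walk a b, ∃ u ∈ p.support, u ∈ S

/-!
The sets `V1`, `Y (a + 1), …, Y (a + k)`, `V2` are `k + 2` pairwise disjoint connected sets, each
meeting every walk from `V1` to `V2`. The nodes whose bags meet a connected set form a subtree of
the decomposition tree, and subtrees of a tree have the Helly property; since no bag can meet
`k + 2` disjoint sets, the subtrees of two of them, `R` and `S`, are disjoint. A tree edge `xy`
between these subtrees gives the separator `B x ∩ B y` of `R` and `S`, of size at most `k` because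
`B x` contains a vertex of `R` that `B y` misses. Finally, a path from `V1` to `V2` meeting
`V1 ∪ V2` only at its ends contains a stretch from `R` to `S` that meets `V1 ∪ V2` at most at its
own ends, so it crosses the separator outside `V1 ∪ V2`.
-/

namespace SimpleGraph

section

variable {V : Type*} {G : SimpleGraph V} {u v w x y : V}

lemma exists_walk_of_preconnected_induce {s : Set V} (h : (G.induce s).Preconnected)
    (hu : u ∈ s) (hv : v ∈ s) : ∃ p : G.Walk u v, ∀ z ∈ p.support, z ∈ s := by
  obtain ⟨p⟩ := h ⟨u, hu⟩ ⟨v, hv⟩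
  refine ⟨p.map (Embedding.induce s).toHom, fun z hz => ?_⟩
  change z ∈ (p.map (Embedding.induce s).toHom).support at hz
  rw [Walk.support_map, List.mem_map] at hz
  obtain ⟨⟨z, hz⟩, -, rfl⟩ := hz
  exact hz

namespace Walk

lemma reachable_deleteEdges_of_notMem_support (p : G.Walk u v) (hx : x ∉ p.support) :
    (G.deleteEdges {s(x, y)}).Reachable u v :=
  reachable_deleteEdges_iff_exists_walk.2 ⟨p, fun h => hx (p.fst_mem_support_of_mem_edges h)⟩

lemma exists_adj_forall_notMem (p : G.Walk u v) {A : Set V} (hv : v ∉ A)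
    (hA : ∃ z ∈ p.support, z ∈ A) :
    ∃ x y, G.Adj x y ∧ x ∈ A ∧ ∃ q : G.Walk y v, ∀ z ∈ q.support, z ∉ A := by
  induction p with
  | nil =>
    obtain ⟨z, hz, hzA⟩ := hA
    rw [support_nil, List.mem_singleton] at hz
    exact absurd (hz ▸ hzA) hv
  | @cons u u' v hadj p ih =>
    by_cases hp : ∃ z ∈ p.support, z ∈ A
    · exact ih hv hp
    · push Not at hp
      obtain ⟨z, hz, hzA⟩ := hA
      rcases List.mem_cons.1 (support_cons hadj p ▸ hz) with rfl | hz
      · exact ⟨z, u', hadj, hzA, p, hp⟩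
      · exact absurd hzA (hp z hz)

lemma IsPath.append {p : G.Walk u v} {q : G.Walk v w} (hp : p.IsPath) (hq : q.IsPath)
    (hpq : ∀ z ∈ p.support, z ∈ q.support → z = v) : (p.append q).IsPath := by
  rw [isPath_def, support_append, List.nodup_append]
  refine ⟨hp.support_nodup, hq.support_nodup.sublist (List.tail_sublist _), ?_⟩
  rintro z hz _ hz' rfl
  have hnd := hq.support_nodup
  rw [← q.cons_tail_support] at hnd
  exact (List.nodup_cons.1 hnd).1 (hpq z hz (List.mem_of_mem_tail hz') ▸ hz')

variable [DecidableEq V]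

lemma exists_mem_support_forall_mem_support_takeUntil (p : G.Walk u v) {S : Set V}
    (hS : ∃ x ∈ p.support, x ∈ S) :
    ∃ x ∈ S, ∃ hx : x ∈ p.support, ∀ z ∈ (p.takeUntil x hx).support, z ∈ S → z = x := by
  classical
  obtain ⟨x, hxs, hx, hfirst⟩ := p.exists_mem_support_forall_mem_support_imp_eq
    {z ∈ p.support.toFinset | z ∈ S} (by
      obtain ⟨x, hx, hxS⟩ := hS
      exact ⟨x, by simp [hx, hxS]⟩)
  refine ⟨x, (Finset.mem_filter.1 hxs).2, hx, fun z hz hzS => hfirst z ?_ hz⟩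
  simp [p.support_takeUntil_subset_support hx hz, hzS]

lemma IsPath.start_notMem_support_dropUntil {p : G.Walk u v} (hp : p.IsPath)
    (hw : w ∈ p.support) (huw : u ≠ w) : u ∉ (p.dropUntil w hw).support := by
  intro hu
  have hnd := hp.support_nodup
  rw [← p.take_spec hw, support_append] at hnd
  rw [← (p.dropUntil w hw).cons_tail_support, List.mem_cons] at hu
  exact List.disjoint_of_nodup_append hnd (p.takeUntil w hw).start_mem_support
    (hu.resolve_left huw)

lemma IsPath.exists_walk_support_subset {p : G.Walk u v} (hp : p.IsPath) {r s : V}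
    (hr : r ∈ p.support) (hs : s ∈ p.support) :
    ∃ q : G.Walk r s, q.support ⊆ p.support ∧
      ∀ z ∈ q.support, z = u ∨ z = v → z = r ∨ z = s := by
  have hsplit : s ∈ (p.takeUntil r hr).support ∨ s ∈ (p.dropUntil r hr).support := by
    rw [← mem_support_append_iff, take_spec]
    exact hs
  rcases hsplit with hs' | hs'
  · refine ⟨((p.takeUntil r hr).dropUntil s hs').reverse, fun z hz => ?_, fun z hz hz' => ?_⟩ <;>
      rw [support_reverse, List.mem_reverse] at hz
    · exact p.support_takeUntil_subset_support hr (support_dropUntil_subset_support _ _ hz)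
    · rcases hz' with rfl | rfl
      · exact .inr (not_not.1 fun hne =>
          (hp.takeUntil hr).start_notMem_support_dropUntil hs' hne hz)
      · exact .inl (not_not.1 fun hne =>
          endpoint_notMem_support_takeUntil hp hr hne (support_dropUntil_subset_support _ _ hz))
  · refine ⟨(p.dropUntil r hr).takeUntil s hs', fun z hz => ?_, fun z hz hz' => ?_⟩
    · exact p.support_dropUntil_subset_support hr (support_takeUntil_subset_support _ _ hz)
    · rcases hz' with rfl | rfl
      · exact .inl (not_not.1 fun hne =>
          hp.start_notMem_support_dropUntil hr hne (support_takeUntil_subset_support _ _ hz))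
      · exact .inr (not_not.1 fun hne =>
          endpoint_notMem_support_takeUntil (hp.dropUntil hr) hs' hne hz)

lemma exists_isPath_between (p : G.Walk u v) {A B : Set V} (hu : u ∈ A) (hv : v ∈ B) :
    ∃ a ∈ A, ∃ b ∈ B, ∃ q : G.Walk a b, q.IsPath ∧ q.support ⊆ p.support ∧
      ∀ z ∈ q.support, (z ∈ A → z = a) ∧ (z ∈ B → z = b) := by
  obtain ⟨a, ha, hap, hA⟩ :=
    p.reverse.exists_mem_support_forall_mem_support_takeUntil ⟨u, by simp, hu⟩
  set q₁ := p.reverse.takeUntil a hap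
  obtain ⟨b, hb, hbq, hB⟩ :=
    q₁.reverse.exists_mem_support_forall_mem_support_takeUntil ⟨v, by simp, hv⟩
  set q₂ := q₁.reverse.takeUntil b hbq
  have hq₂ : q₂.support ⊆ q₁.support := fun z hz => by
    simpa using q₁.reverse.support_takeUntil_subset_support hbq hz
  refine ⟨a, ha, b, hb, q₂.bypass, q₂.bypass_isPath, fun z hz => ?_, fun z hz => ?_⟩
  · have hz := hq₂ (q₂.support_bypass_subset_support hz)
    simpa using p.reverse.support_takeUntil_subset_support hap hz
  · have hz := q₂.support_bypass_subset_support hz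
    exact ⟨hA z (hq₂ hz), hB z hz⟩

end Walk

end

section

variable {W : Type*} {T : SimpleGraph W} {x y : W}

/-- Convexity with respect to all paths; in a tree these are the vertex sets of subtrees. -/
def IsPathConvex (T : SimpleGraph W) (S : Set W) : Prop :=
  ∀ ⦃u v⦄ (p : T.Walk u v), p.IsPath → u ∈ S → v ∈ S → ∀ z ∈ p.support, z ∈ S

lemma IsPathConvex.inter {S S' : Set W} (hS : IsPathConvex T S) (hS' : IsPathConvex T S') :
    IsPathConvex T (S ∩ S') :=
  fun _ _ p hp hu hv z hz => ⟨hS p hp hu.1 hv.1 z hz, hS' p hp hu.2 hv.2 z hz⟩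

lemma IsAcyclic.isPathConvex (hT : T.IsAcyclic) {S : Set W}
    (hS : ∀ u ∈ S, ∀ v ∈ S, ∃ p : T.Walk u v, ∀ z ∈ p.support, z ∈ S) : IsPathConvex T S := by
  classical
  intro u v p hp hu hv z hz
  obtain ⟨q, hq⟩ := hS u hu v hv
  have hpq : p = q.bypass :=
    congrArg Subtype.val ((hT.subsingleton_path u v).elim ⟨p, hp⟩ ⟨q.bypass, q.bypass_isPath⟩)
  exact hq z (q.support_bypass_subset_support (hpq ▸ hz))

lemma Preconnected.inter_nonempty_of_isPathConvex (hT : T.Preconnected) {X Y Z : Set W}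
    (hX : IsPathConvex T X) (hY : IsPathConvex T Y) (hZ : IsPathConvex T Z)
    (hXY : (X ∩ Y).Nonempty) (hYZ : (Y ∩ Z).Nonempty) (hXZ : (X ∩ Z).Nonempty) :
    (X ∩ Y ∩ Z).Nonempty := by
  classical
  obtain ⟨c, hcX, hcY⟩ := hXY
  obtain ⟨a, haY, haZ⟩ := hYZ
  obtain ⟨b, hbX, hbZ⟩ := hXZ
  obtain ⟨p, hp⟩ := hT.exists_isPath c a
  obtain ⟨m, hmZ, hm, hfirst⟩ :=
    p.exists_mem_support_forall_mem_support_takeUntil ⟨a, p.end_mem_support, haZ⟩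
  obtain ⟨q, hq⟩ := hT.exists_isPath m b
  -- `p` up to its first vertex in `Z`, followed by a path inside `Z`, is a path from `c` to `b`
  have hpath : ((p.takeUntil m hm).append q).IsPath :=
    (hp.takeUntil hm).append hq fun z hz hzq => hfirst z hz (hZ q hq hmZ hbZ z hzq)
  have hmX : m ∈ X :=
    hX _ hpath hcX hbX m ((Walk.mem_support_append_iff _ _).2 (.inr q.start_mem_support))
  exact ⟨m, ⟨hmX, hY p hp hcY haY m hm⟩, hmZ⟩

lemma Preconnected.exists_mem_of_isPathConvex {ι : Type*} (hT : T.Preconnected) {s : Finset ι}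
    (hs : s.Nonempty) {f : ι → Set W} (hf : ∀ i ∈ s, IsPathConvex T (f i))
    (hpair : ∀ i ∈ s, ∀ j ∈ s, (f i ∩ f j).Nonempty) : ∃ w, ∀ i ∈ s, w ∈ f i := by
  induction hs using Finset.Nonempty.cons_induction generalizing f with
  | singleton i =>
    obtain ⟨w, hw, -⟩ := hpair i (Finset.mem_singleton_self i) i (Finset.mem_singleton_self i)
    exact ⟨w, fun j hj => Finset.mem_singleton.1 hj ▸ hw⟩
  | cons a s ha hs ih =>
    simp only [Finset.mem_cons, forall_eq_or_imp] at hf hpair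
    obtain ⟨w, hw⟩ := ih (f := fun i => f i ∩ f a) (fun i hi => (hf.2 i hi).inter hf.1)
      fun i hi j hj => by
        obtain ⟨w, ⟨hwi, hwj⟩, hwa⟩ := hT.inter_nonempty_of_isPathConvex (hf.2 i hi)
          (hf.2 j hj) hf.1 ((hpair.2 i hi).2 j hj) (hpair.2 j hj).1 (hpair.2 i hi).1
        exact ⟨w, ⟨hwi, hwa⟩, hwj, hwa⟩
    obtain ⟨j, hj⟩ := hs
    refine ⟨w, fun i hi => ?_⟩
    rcases Finset.mem_cons.1 hi with rfl | hi
    · exact (hw j hj).2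
    · exact (hw i hi).1

lemma Preconnected.reachable_deleteEdges_or (hT : T.Preconnected) (hxy : T.Adj x y) (w : W) :
    (T.deleteEdges {s(x, y)}).Reachable w x ∨ (T.deleteEdges {s(x, y)}).Reachable w y := by
  classical
  obtain ⟨p, hp⟩ := hT.exists_isPath w x
  by_cases hy : y ∈ p.support
  · refine .inr ((p.takeUntil y hy).reachable_deleteEdges_of_notMem_support ?_)
    exact Walk.endpoint_notMem_support_takeUntil hp hy hxy.ne
  · rw [Sym2.eq_swap]
    exact .inl (p.reachable_deleteEdges_of_notMem_support hy)

lemma IsTree.mem_of_reachable_deleteEdges (hT : T.IsTree) (hxy : T.Adj x y) {S : Set W}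
    (hS : IsPathConvex T S) {w₁ w₂ : W} (h₁ : w₁ ∈ S) (h₂ : w₂ ∈ S)
    (hr₁ : (T.deleteEdges {s(x, y)}).Reachable w₁ x)
    (hr₂ : (T.deleteEdges {s(x, y)}).Reachable w₂ y) : x ∈ S ∧ y ∈ S := by
  obtain ⟨p, hp⟩ := hT.connected.preconnected.exists_isPath w₁ w₂
  have hbridge := isBridge_iff.1 (isAcyclic_iff_forall_adj_isBridge.1 hT.isAcyclic hxy)
  have hxy_mem : s(x, y) ∈ p.edges :=
    p.mem_edges_of_not_reachable_deleteEdges fun h => hbridge ((hr₁.symm.trans h).trans hr₂)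
  exact ⟨hS p hp h₁ h₂ x (p.fst_mem_support_of_mem_edges hxy_mem),
    hS p hp h₁ h₂ y (p.snd_mem_support_of_mem_edges hxy_mem)⟩

lemma IsTree.exists_adj_separating (hT : T.IsTree) {A C : Set W} (hA : IsPathConvex T A)
    (hC : IsPathConvex T C) (hAC : Disjoint A C) (hAne : A.Nonempty) (hCne : C.Nonempty) :
    ∃ x y, T.Adj x y ∧ x ∈ A ∧ y ∉ A ∧ (∀ w ∈ A, (T.deleteEdges {s(x, y)}).Reachable w x) ∧
      ∀ w ∈ C, (T.deleteEdges {s(x, y)}).Reachable w y := by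
  obtain ⟨a, ha⟩ := hAne
  obtain ⟨c, hc⟩ := hCne
  have hT' := hT.connected.preconnected
  obtain ⟨x, y, hxy, hx, q, hq⟩ :=
    (hT' a c).some.exists_adj_forall_notMem (hAC.notMem_of_mem_right hc) ⟨a, by simp, ha⟩
  refine ⟨x, y, hxy, hx, hq y q.start_mem_support, fun w hw => ?_, fun w hw => ?_⟩
  · obtain ⟨p, hp⟩ := hT'.exists_isPath w x
    rw [Sym2.eq_swap]
    exact p.reachable_deleteEdges_of_notMem_support fun hy =>
      hq y q.start_mem_support (hA p hp hw hx y hy)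
  · obtain ⟨p, hp⟩ := hT'.exists_isPath w c
    have hpc := p.reachable_deleteEdges_of_notMem_support (y := y) fun hxp =>
      hAC.notMem_of_mem_left hx (hC p hp hw hc x hxp)
    exact hpc.trans (q.reachable_deleteEdges_of_notMem_support fun hxq => hq x hxq hx).symm

end

end SimpleGraph

namespace SeparatesWalks

variable {V : Type} {G : SimpleGraph V} {A B S : Set V}

lemma symm (h : SeparatesWalks G A B S) : SeparatesWalks G B A S := fun b hb a ha p => by
  obtain ⟨u, hu, huS⟩ := h a ha b hb p.reverse
  exact ⟨u, by simpa using hu, huS⟩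

lemma mono {A' B' : Set V} (h : SeparatesWalks G A B S) (hA : A' ⊆ A) (hB : B' ⊆ B) :
    SeparatesWalks G A' B' S :=
  fun a ha b hb => h a (hA ha) b (hB hb)

lemma sdiff {R X : Set V} (hR : SeparatesWalks G A B R) (hS : SeparatesWalks G A B S)
    (hX : SeparatesWalks G R S X) (hRX : Disjoint R X) (hSX : Disjoint S X) :
    SeparatesWalks G A B (X \ (A ∪ B)) := by
  classical
  intro a₀ ha₀ b₀ hb₀ p
  obtain ⟨a, ha, b, hb, q, hq, hqp, hends⟩ := p.exists_isPath_between ha₀ hb₀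
  obtain ⟨r, hrq, hr⟩ := hR a ha b hb q
  obtain ⟨s, hsq, hs⟩ := hS a ha b hb q
  obtain ⟨U, hUq, hUends⟩ := hq.exists_walk_support_subset hrq hsq
  obtain ⟨ξ, hξU, hξX⟩ := hX r hr s hs U
  refine ⟨ξ, hqp (hUq hξU), hξX, fun hξAB => ?_⟩
  -- on `q` only the endpoints lie in `A ∪ B`, and on `U` they can only be `r` or `s`
  have hξ : ξ = a ∨ ξ = b := hξAB.imp (hends ξ (hUq hξU)).1 (hends ξ (hUq hξU)).2
  rcases hUends ξ hξU hξ with rfl | rfl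
  · exact hRX.notMem_of_mem_left hr hξX
  · exact hSX.notMem_of_mem_left hs hξX

end SeparatesWalks

def bagsMeeting {V W : Type} (B : W → Set V) (P : Set V) : Set W := {w | ∃ v ∈ P, v ∈ B w}

namespace IsTreeDecomp

variable {V W : Type} {G : SimpleGraph V} {T : SimpleGraph W} {B : W → Set V}

lemma isPathConvex_bagsMeeting (hD : IsTreeDecomp G T B) {P : Set V}
    (hP : (G.induce P).Preconnected) : IsPathConvex T (bagsMeeting B P) := by
  obtain ⟨hT, -, hedge, hbags⟩ := hD
  have hwalk : ∀ {p p' : V} (γ : G.Walk p p'), (∀ z ∈ γ.support, z ∈ P) →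
      ∀ u, p ∈ B u → ∀ w, p' ∈ B w →
        ∃ π : T.Walk u w, ∀ z ∈ π.support, z ∈ bagsMeeting B P := by
    intro p p' γ
    induction γ with
    | @nil p =>
      intro hγ u hu w hw
      obtain ⟨π, hπ⟩ := exists_walk_of_preconnected_induce (hbags p).preconnected hu hw
      exact ⟨π, fun z hz => ⟨p, hγ p (by simp), hπ z hz⟩⟩
    | @cons p p₁ p' hadj γ ih =>
      intro hγ u hu w hw
      obtain ⟨m, hm, hm₁⟩ := hedge p p₁ hadj
      obtain ⟨π, hπ⟩ := exists_walk_of_preconnected_induce (hbags p).preconnected hu hm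
      obtain ⟨π', hπ'⟩ := ih (fun z hz => hγ z (List.mem_cons_of_mem _ hz)) m hm₁ w hw
      refine ⟨π.append π', fun z hz => ?_⟩
      rcases (Walk.mem_support_append_iff _ _).1 hz with hz | hz
      · exact ⟨p, hγ p (by simp), hπ z hz⟩
      · exact hπ' z hz
  refine hT.isAcyclic.isPathConvex fun u ⟨p, hp, hpu⟩ w ⟨p', hp', hpw⟩ => ?_
  obtain ⟨γ, hγ⟩ := exists_walk_of_preconnected_induce hP hp hp'
  exact hwalk γ hγ u hpu w hpw

lemma separatesWalks_inter (hD : IsTreeDecomp G T B) {x y : W} (hxy : T.Adj x y) :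
    SeparatesWalks G {v | ∃ w, v ∈ B w ∧ (T.deleteEdges {s(x, y)}).Reachable w x}
      {v | ∃ w, v ∈ B w ∧ (T.deleteEdges {s(x, y)}).Reachable w y} (B x ∩ B y) := by
  obtain ⟨hT, -, hedge, hbags⟩ := hD
  have hboth : ∀ v, (∃ w, v ∈ B w ∧ (T.deleteEdges {s(x, y)}).Reachable w x) →
      (∃ w, v ∈ B w ∧ (T.deleteEdges {s(x, y)}).Reachable w y) → v ∈ B x ∩ B y := by
    rintro v ⟨w₁, h₁, hr₁⟩ ⟨w₂, h₂, hr₂⟩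
    have hconv : IsPathConvex T {w | v ∈ B w} := hT.isAcyclic.isPathConvex
      fun _ hu _ hw => exists_walk_of_preconnected_induce (hbags v).preconnected hu hw
    exact hT.mem_of_reachable_deleteEdges hxy hconv h₁ h₂ hr₁ hr₂
  intro α hα β hβ p
  induction p with
  | nil => exact ⟨_, by simp, hboth _ hα hβ⟩
  | @cons α γ β hadj p ih =>
    by_cases hγ : ∃ w, γ ∈ B w ∧ (T.deleteEdges {s(x, y)}).Reachable w x
    · obtain ⟨ξ, hξ, hξB⟩ := ih hγ hβ
      exact ⟨ξ, List.mem_cons_of_mem _ hξ, hξB⟩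
    · obtain ⟨m, hαm, hγm⟩ := hedge α γ hadj
      have hmy := (hT.connected.preconnected.reachable_deleteEdges_or hxy m).resolve_left
        fun hmx => hγ ⟨m, hγm, hmx⟩
      exact ⟨α, by simp, hboth α hα ⟨m, hαm, hmy⟩⟩

theorem exists_separatesWalks [Finite V] {ι : Type} [Fintype ι] {k : ℕ}
    (hD : IsTreeDecomp G T B) (hbag : ∀ w, (B w).ncard ≤ k + 1) {P : ι → Set V}
    (hcard : k + 1 < Fintype.card ι) (hne : ∀ i, (P i).Nonempty)
    (hconn : ∀ i, (G.induce (P i)).Connected)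
    (hdisj : Pairwise fun i j => Disjoint (P i) (P j)) :
    ∃ i j, ∃ S : Set V, S.ncard ≤ k ∧ Disjoint (P i) S ∧ Disjoint (P j) S ∧
      SeparatesWalks G (P i) (P j) S := by
  have hT : T.IsTree := hD.1
  have hcover : ∀ v, ∃ w, v ∈ B w := hD.2.1
  have hconv i : IsPathConvex T (bagsMeeting B (P i)) :=
    hD.isPathConvex_bagsMeeting (hconn i).preconnected
  have hmeet i : (bagsMeeting B (P i)).Nonempty := by
    obtain ⟨v, hv⟩ := hne i
    obtain ⟨w, hw⟩ := hcover v
    exact ⟨w, v, hv, hw⟩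
  obtain ⟨i, j, hij⟩ : ∃ i j, Disjoint (bagsMeeting B (P i)) (bagsMeeting B (P j)) := by
    by_contra! hpair
    have hι : (Finset.univ : Finset ι).Nonempty :=
      Finset.univ_nonempty_iff.2 (Fintype.card_pos_iff.1 (by omega))
    obtain ⟨w, hw⟩ := hT.connected.preconnected.exists_mem_of_isPathConvex hι
      (fun i _ => hconv i) fun i _ j _ => Set.not_disjoint_iff_nonempty_inter.1 (hpair i j)
    -- `B w` meets each of the disjoint sets `P i`, so it is too large
    choose rep hrepP hrepB using fun i => hw i (Finset.mem_univ i)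
    have hinj : Function.Injective fun i => (⟨rep i, hrepB i⟩ : B w) := fun i j hij => by
      have hrep : rep i = rep j := congrArg Subtype.val hij
      exact hdisj.eq (Set.not_disjoint_iff.2 ⟨rep i, hrepP i, hrep ▸ hrepP j⟩)
    have := Nat.card_le_card_of_injective _ hinj
    rw [Nat.card_eq_fintype_card, Nat.card_coe_set_eq] at this
    have := hbag w
    omega
  obtain ⟨x, y, hxy, hx, hy, hxside, hyside⟩ :=
    hT.exists_adj_separating (hconv i) (hconv j) hij (hmeet i) (hmeet j)
  have hiS : Disjoint (P i) (B x ∩ B y) :=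
    Set.disjoint_left.2 fun v hv hvS => hy ⟨v, hv, hvS.2⟩
  have hjS : Disjoint (P j) (B x ∩ B y) :=
    Set.disjoint_left.2 fun v hv hvS => hij.notMem_of_mem_left hx ⟨v, hv, hvS.1⟩
  refine ⟨i, j, B x ∩ B y, ?_, hiS, hjS, (hD.separatesWalks_inter hxy).mono ?_ ?_⟩
  · obtain ⟨ρ, hρ, hρx⟩ := hx
    have hlt := Set.ncard_lt_ncard ((Set.ssubset_iff_of_subset Set.inter_subset_left).2
      ⟨ρ, hρx, hiS.notMem_of_mem_left hρ⟩)
    have := hbag x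
    omega
  · intro v hv
    obtain ⟨w, hw⟩ := hcover v
    exact ⟨w, hw, hxside w ⟨v, hv, hw⟩⟩
  · intro v hv
    obtain ⟨w, hw⟩ := hcover v
    exact ⟨w, hw, hyside w ⟨v, hv, hw⟩⟩

end IsTreeDecomp

lemma exists_disjoint_connected_family {V : Type} {G : SimpleGraph V} (h : V → ℕ)
    {V1 V2 : Set V} {a b k : ℕ} (hV1ne : V1.Nonempty) (hV2ne : V2.Nonempty)
    (hV1conn : (G.induce V1).Connected) (hV2conn : (G.induce V2).Connected)
    (ha : ∀ v ∈ V1, h v ≤ a) (hb : ∀ v ∈ V2, b ≤ h v) (hab : a + (k + 1) ≤ b)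
    (hlevel : ∀ i : ℕ, a < i → i < b →
      ∃ Y : Set V, Y.Nonempty ∧ Y ⊆ {v | h v = i} ∧ (G.induce Y).Connected ∧
        ∀ s ∈ V2, ∀ u : V, h u < i → ∀ p : G.Walk s u, ∃ y ∈ p.support, y ∈ Y) :
    ∃ P : Fin (k + 2) → Set V,
      (∀ i, (P i).Nonempty ∧ (G.induce (P i)).Connected ∧ SeparatesWalks G V1 V2 (P i)) ∧
        Pairwise fun i j => Disjoint (P i) (P j) := by
  choose! Y hYne hYh hYconn hYsep using hlevel
  let P : Fin (k + 2) → Set V := fun i =>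
    if (i : ℕ) = 0 then V1 else if (i : ℕ) = k + 1 then V2 else Y (a + i)
  have hPi : ∀ i : Fin (k + 2), P i = V1 ∧ (i : ℕ) = 0 ∨ P i = V2 ∧ (i : ℕ) = k + 1 ∨
      P i = Y (a + i) ∧ a < a + i ∧ a + i < b := by
    intro i
    dsimp only [P]
    split_ifs with h0 h1
    exacts [.inl ⟨rfl, h0⟩, .inr (.inl ⟨rfl, h1⟩), .inr (.inr ⟨rfl, by omega, by omega⟩)]
  refine ⟨P, fun i => ?_, fun i j hij => ?_⟩
  · rcases hPi i with ⟨hi, -⟩ | ⟨hi, -⟩ | ⟨hi, h₁, h₂⟩ <;> rw [hi]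
    · exact ⟨hV1ne, hV1conn, fun v hv _ _ p => ⟨v, p.start_mem_support, hv⟩⟩
    · exact ⟨hV2ne, hV2conn, fun _ _ v hv p => ⟨v, p.end_mem_support, hv⟩⟩
    · refine ⟨hYne _ h₁ h₂, hYconn _ h₁ h₂, SeparatesWalks.symm fun s hs u hu =>
        hYsep _ h₁ h₂ s hs u (by have := ha u hu; omega)⟩
  · have hidx : ∀ i : Fin (k + 2), ∀ v ∈ P i, min (h v - a) (k + 1) = i := by
      intro i v hv
      rcases hPi i with ⟨hi, h₀⟩ | ⟨hi, h₀⟩ | ⟨hi, h₁, h₂⟩ <;> rw [hi] at hv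
      · have := ha v hv
        omega
      · have := hb v hv
        omega
      · have : h v = a + i := hYh _ h₁ h₂ hv
        omega
    exact Set.disjoint_left.2 fun v hi hj =>
      hij (Fin.ext ((hidx i v hi).symm.trans (hidx j v hj)))

theorem stmt0_general {V : Type} [Fintype V] (G : SimpleGraph V) (k : ℕ)
    (htw : ∃ (W : Type) (_ : Fintype W) (T : SimpleGraph W) (B : W → Set V),
      IsTreeDecomp G T B ∧ ∀ w, (B w).ncard ≤ k + 1)
    (h : V → ℕ) (V1 V2 : Set V) (hV1ne : V1.Nonempty) (hV2ne : V2.Nonempty)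
    (hV1conn : (G.induce V1).Connected) (hV2conn : (G.induce V2).Connected)
    (a b : ℕ) (ha : IsGreatest (h '' V1) a) (hb : IsLeast (h '' V2) b)
    (hab : a + (k + 1) ≤ b)
    (hlevel : ∀ i : ℕ, a < i → i < b →
      ∃ Y : Set V, Y.Nonempty ∧ Y ⊆ {v | h v = i} ∧ (G.induce Y).Connected ∧
        ∀ s ∈ V2, ∀ u : V, h u < i → ∀ p : G.Walk s u, ∃ y ∈ p.support, y ∈ Y) :
    ∃ Y : Set V, Y.ncard ≤ k ∧ Y ∩ (V1 ∪ V2) = ∅ ∧ SeparatesWalks G V1 V2 Y := by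
  obtain ⟨W, _, T, B, hD, hbag⟩ := htw
  obtain ⟨P, hP, hdisj⟩ := exists_disjoint_connected_family h hV1ne hV2ne hV1conn hV2conn
    (fun v hv => ha.2 ⟨v, hv, rfl⟩) (fun v hv => hb.2 ⟨v, hv, rfl⟩) hab hlevel
  obtain ⟨i, j, S, hS, hiS, hjS, hsep⟩ := hD.exists_separatesWalks hbag (by simp)
    (fun i => (hP i).1) (fun i => (hP i).2.1) hdisj
  exact ⟨S \ (V1 ∪ V2), (Set.ncard_le_ncard Set.sdiff_subset).trans hS, Set.sdiff_inter_self,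
    (hP i).2.2.sdiff (hP j).2.2 hsep hiS hjS⟩

/-- If `G` has a tree decomposition of width at most `k > 1`,
`V1`, `V2` are nonempty connected vertex sets whose heights (w.r.t. `h`) differ
by at least `k + 1`, and `h` satisfies the level-separation property, then there
is a set `Y` of at most `k` vertices strongly disconnecting `V1` and `V2`. -/
theorem stmt0 {V : Type} [Fintype V] (G : SimpleGraph V) (k : ℕ) (hk : 1 < k)
    (htw : ∃ (W : Type) (_ : Fintype W) (T : SimpleGraph W) (B : W → Set V),
      IsTreeDecomp G T B ∧ ∀ w, (B w).ncard ≤ k + 1)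
    (h : V → ℕ) (V1 V2 : Set V) (hV1ne : V1.Nonempty) (hV2ne : V2.Nonempty)
    (hV1conn : (G.induce V1).Connected) (hV2conn : (G.induce V2).Connected)
    (a b : ℕ) (ha : IsGreatest (h '' V1) a) (hb : IsLeast (h '' V2) b)
    (hab : a + (k + 1) ≤ b)
    (hlevel : ∀ i : ℕ, a < i → i < b →
      ∃ Y : Set V, Y.Nonempty ∧ Y ⊆ {v | h v = i} ∧ (G.induce Y).Connected ∧
        ∀ s ∈ V2, ∀ u : V, h u < i → ∀ p : G.Walk s u, ∃ y ∈ p.support, y ∈ Y) :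
    ∃ Y : Set V, Y.ncard ≤ k ∧ Y ∩ (V1 ∪ V2) = ∅ ∧ SeparatesWalks G V1 V2 Y :=
  stmt0_general G k htw h V1 V2 hV1ne hV2ne hV1conn hV2conn a b ha hb hab hlevel
end

section
/- Let G = (V,E) be a connected finite simple graph, let T = (V,F) with F ⊆ E be a spanning tree of G, and let c be a choice function assigning to each non-tree edge e ∈ E∖F one of its endpoints c(e) ∈ e. Then the standard tree decomposition (T*,B*) of G with skeleton T determined by c is indeed a tree decomposition of G; in particular T* is a tree. -/
open SimpleGraph

/-- The (unique) path in a connected graph `T` from `u` to `v`, obtained by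
taking an arbitrary walk and removing repetitions. In a tree this is the
unique `u`-`v` path. -/
noncomputable def fcPath {V : Type} (T : SimpleGraph V) (hT : T.Connected)
    (u v : V) : T.Walk u v := by
  classical
  exact ((hT.preconnected u v).some).toPath.1

/-- The vertex set `C_e` of the fundamental cycle of an edge `e = s(u,v)`:
the vertices on the unique `u`-`v` path in the tree `T`. -/
noncomputable def fcSupport {V : Type} (T : SimpleGraph V) (hT : T.Connected)
    (e : Sym2 V) : Set V :=
  {x | ∀ u v : V, e = s(u, v) → x ∈ (fcPath T hT u v).support}

/-- The tree-edge set `F_e` of the fundamental cycle of an edge `e = s(u,v)`: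
the edges on the unique `u`-`v` path in the tree `T`. -/
noncomputable def fcEdges {V : Type} (T : SimpleGraph V) (hT : T.Connected)
    (e : Sym2 V) : Set (Sym2 V) :=
  {f | ∀ u v : V, e = s(u, v) → f ∈ (fcPath T hT u v).edges}

/-- The node graph `T*` of the standard tree decomposition: nodes are the
vertices of `T` together with the edges of `T`, and a vertex node is adjacent
to an edge node iff the vertex is an endpoint of the edge. -/
def starGraph {V : Type} (T : SimpleGraph V) : SimpleGraph (V ⊕ T.edgeSet) :=
  SimpleGraph.fromRel (fun a b =>
    match a, b with
    | .inl v, .inr f => v ∈ (f.1 : Sym2 V)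
    | _, _ => False)

/-- The bags `B*` of the standard tree decomposition with skeleton `T`,
determined by the choice function `c` on non-tree edges. -/
noncomputable def stdBags {V : Type} (G T : SimpleGraph V) (hT : T.Connected)
    (c : Sym2 V → V) : V ⊕ T.edgeSet → Set V :=
  Sum.elim
    (fun v => {v} ∪
      {x | ∃ e ∈ G.edgeSet \ T.edgeSet, x = c e ∧ v ∈ fcSupport T hT e})
    (fun f => {x | x ∈ (f.1 : Sym2 V)} ∪
      {x | ∃ e ∈ G.edgeSet \ T.edgeSet, x = c e ∧ (f.1 : Sym2 V) ∈ fcEdges T hT e})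

/-!
`T*` is the subdivision of `T`: it is connected because walks of `T` lift to it, and every edge
`{v, f}` of `T*` with `f = vw` is a bridge because `f` is a bridge of `T`. Indeed, a walk in `T*`
from `v` to `f` must leave the set of nodes lying on `v`'s side of `T - f`, and the only edge of
`T*` doing so is `{v, f}` itself.

The nodes whose bag contains `x` are the star of `x` in `T*` together with, for every non-tree
edge `e` with `c e = x`, the nodes along the `T`-path of `e`; each of these pieces contains `x` and
is connected, the latter being the support of a lifted walk.
-/

section StarGraph

variable {V : Type} {T : SimpleGraph V}

@[simp]
lemma starGraph_adj_inl_inr {v : V} {f : T.edgeSet} :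
    (_root_.starGraph T).Adj (.inl v) (.inr f) ↔ v ∈ (f : Sym2 V) := by
  simp [_root_.starGraph]

@[simp]
lemma starGraph_adj_inr_inl {v : V} {f : T.edgeSet} :
    (_root_.starGraph T).Adj (.inr f) (.inl v) ↔ v ∈ (f : Sym2 V) := by
  simp [_root_.starGraph]

@[simp]
lemma starGraph_not_adj_inl_inl {v w : V} : ¬(_root_.starGraph T).Adj (.inl v) (.inl w) := by
  simp [_root_.starGraph]

@[simp]
lemma starGraph_not_adj_inr_inr {f g : T.edgeSet} :
    ¬(_root_.starGraph T).Adj (.inr f) (.inr g) := by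
  simp [_root_.starGraph]

def SimpleGraph.Walk.toStarGraph :
    ∀ {u v : V}, T.Walk u v → (_root_.starGraph T).Walk (.inl u) (.inl v)
  | _, _, .nil => .nil
  | u, _, .cons (v := w) h p =>
    .cons (v := .inr ⟨s(u, w), h⟩) (by simp) (.cons (by simp) p.toStarGraph)

lemma SimpleGraph.Walk.mem_support_toStarGraph {u v : V} (p : T.Walk u v)
    (n : V ⊕ T.edgeSet) :
    n ∈ p.toStarGraph.support ↔
      Sum.elim (· ∈ p.support) (fun f : T.edgeSet => (f : Sym2 V) ∈ p.edges) n := by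
  induction p with
  | nil => cases n <;> simp [Walk.toStarGraph]
  | cons h p ih => cases n <;> simp [Walk.toStarGraph, ih, Subtype.ext_iff]

lemma connected_starGraph_of_connected (hT : T.Connected) : (_root_.starGraph T).Connected := by
  obtain ⟨v₀⟩ := hT.nonempty
  have hreach (v : V) : (_root_.starGraph T).Reachable (.inl v₀) (.inl v) :=
    ((hT.preconnected v₀ v).some.toStarGraph).reachable
  rw [connected_iff_exists_forall_reachable]
  refine ⟨.inl v₀, ?_⟩
  rintro (v | f)
  · exact hreach v
  · exact (hreach _).trans (starGraph_adj_inl_inr.mpr (Sym2.out_fst_mem f.1)).reachable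

lemma reachable_deleteEdges_of_mem {e e' : Sym2 V} (he : e ∈ T.edgeSet) (hne : e ≠ e')
    {a b : V} (ha : a ∈ e) (hb : b ∈ e) : (T.deleteEdges {e'}).Reachable a b := by
  obtain rfl | hab := eq_or_ne a b
  · rfl
  rw [Sym2.mem_and_mem_iff hab |>.mp ⟨ha, hb⟩] at he hne
  exact (deleteEdges_adj.mpr ⟨he, hne⟩).reachable

lemma isBridge_starGraph_of_isBridge {f : T.edgeSet} {v : V} (hf : T.IsBridge f)
    (hv : v ∈ (f : Sym2 V)) :
    (_root_.starGraph T).IsBridge s(.inl v, .inr f) := by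
  set w := Sym2.Mem.other hv
  have hfvw : (f : Sym2 V) = s(v, w) := (Sym2.other_spec hv).symm
  rw [hfvw, isBridge_iff] at hf
  let R := (T.deleteEdges {s(v, w)}).Reachable v
  let S : Set (V ⊕ T.edgeSet) :=
    {n | Sum.elim R (fun g : T.edgeSet => g ≠ f ∧ ∀ a ∈ (g : Sym2 V), R a) n}
  rw [isBridge_iff_forall_walk_mem_edges]
  intro p
  obtain ⟨⟨⟨x | g, y | g'⟩, hadj⟩, hd, hx, hy⟩ :=
    p.exists_boundary_dart S (Reachable.refl v) (by simp [S])
  · simp at hadj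
  · change R x at hx
    have hxg : x ∈ (g' : Sym2 V) := starGraph_adj_inl_inr.mp hadj
    obtain rfl : g' = f := by
      by_contra hne
      refine hy ⟨hne, fun a ha => hx.trans (reachable_deleteEdges_of_mem g'.2 ?_ hxg ha)⟩
      rwa [← hfvw, Ne, ← Subtype.ext_iff]
    obtain rfl : x = v := by
      rcases Sym2.mem_iff.mp (hfvw ▸ hxg) with rfl | rfl
      · rfl
      · exact absurd hx hf
    exact p.edges_eq_map_darts ▸ List.mem_map_of_mem hd
  · exact absurd (hx.2 y (starGraph_adj_inr_inl.mp hadj)) hy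
  · simp at hadj

lemma isAcyclic_starGraph_of_isAcyclic (hT : T.IsAcyclic) :
    (_root_.starGraph T).IsAcyclic := by
  have hbridge (v : V) (f : T.edgeSet) (hv : v ∈ (f : Sym2 V)) :
      (_root_.starGraph T).IsBridge s(.inl v, .inr f) :=
    isBridge_starGraph_of_isBridge (isAcyclic_iff_forall_isBridge.mp hT f.2) hv
  rw [isAcyclic_iff_forall_adj_isBridge]
  rintro (v | f) (w | g) hadj
  · simp at hadj
  · exact hbridge v g (starGraph_adj_inl_inr.mp hadj)
  · rw [Sym2.eq_swap]
    exact hbridge w f (starGraph_adj_inr_inl.mp hadj)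
  · simp at hadj

end StarGraph

section FundamentalCycle

variable {V : Type} {T : SimpleGraph V} (hT : T.Connected)

lemma fcPath_isPath (u v : V) : (fcPath T hT u v).IsPath := by
  classical
  exact (hT.preconnected u v).some.toPath.2

lemma fcPath_swap (hA : T.IsAcyclic) (u v : V) :
    fcPath T hT v u = (fcPath T hT u v).reverse :=
  congrArg Subtype.val <|
    (hA.subsingleton_path v u).elim ⟨_, fcPath_isPath hT v u⟩ ⟨_, (fcPath_isPath hT u v).reverse⟩

lemma fcSupport_mk (hA : T.IsAcyclic) (u v : V) :
    fcSupport T hT s(u, v) = {x | x ∈ (fcPath T hT u v).support} := by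
  ext x
  refine ⟨fun h => h u v rfl, fun h a b hab => ?_⟩
  rcases Sym2.eq_iff.mp hab with ⟨rfl, rfl⟩ | ⟨rfl, rfl⟩
  · exact h
  · rwa [fcPath_swap hT hA, Walk.support_reverse, List.mem_reverse]

lemma fcEdges_mk (hA : T.IsAcyclic) (u v : V) :
    fcEdges T hT s(u, v) = {f | f ∈ (fcPath T hT u v).edges} := by
  ext f
  refine ⟨fun h => h u v rfl, fun h a b hab => ?_⟩
  rcases Sym2.eq_iff.mp hab with ⟨rfl, rfl⟩ | ⟨rfl, rfl⟩
  · exact h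
  · rwa [fcPath_swap hT hA, Walk.edges_reverse, List.mem_reverse]

lemma mem_fcSupport_of_mem {e : Sym2 V} {x : V} (hx : x ∈ e) : x ∈ fcSupport T hT e := by
  rintro u v rfl
  rcases Sym2.mem_iff.mp hx with rfl | rfl
  · exact Walk.start_mem_support _
  · exact Walk.end_mem_support _

def fcNodes (e : Sym2 V) : Set (V ⊕ T.edgeSet) :=
  {n | Sum.elim (· ∈ fcSupport T hT e) (fun f : T.edgeSet => (f : Sym2 V) ∈ fcEdges T hT e) n}

lemma fcNodes_mk (hA : T.IsAcyclic) (u v : V) :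
    fcNodes hT s(u, v) = {n | n ∈ (fcPath T hT u v).toStarGraph.support} := by
  ext n
  rw [Set.mem_ofPred_eq, Walk.mem_support_toStarGraph]
  cases n <;> simp [fcNodes, fcSupport_mk hT hA, fcEdges_mk hT hA]

lemma connected_induce_fcNodes (hA : T.IsAcyclic) (e : Sym2 V) :
    ((_root_.starGraph T).induce (fcNodes hT e)).Connected := by
  induction e using Sym2.ind with
  | _ u v =>
    rw [fcNodes_mk hT hA]
    exact Walk.connected_induce_support _

end FundamentalCycle

section StdBags

variable {V : Type} {G T : SimpleGraph V} (hT : T.Connected) {c : Sym2 V → V}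

lemma mem_stdBags_iff {x : V} {n : V ⊕ T.edgeSet} :
    x ∈ stdBags G T hT c n ↔ Sum.elim (x = ·) (fun f : T.edgeSet => x ∈ (f : Sym2 V)) n ∨
      ∃ e ∈ G.edgeSet \ T.edgeSet, x = c e ∧ n ∈ fcNodes hT e := by
  cases n <;> rfl

lemma fcNodes_subset_stdBags {e : Sym2 V} (he : e ∈ G.edgeSet \ T.edgeSet) :
    fcNodes hT e ⊆ {n | c e ∈ stdBags G T hT c n} :=
  fun _ hn => (mem_stdBags_iff hT).mpr (Or.inr ⟨e, he, rfl, hn⟩)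

lemma exists_mem_stdBags_of_adj (hc : ∀ e ∈ G.edgeSet \ T.edgeSet, c e ∈ e) {u v : V}
    (huv : G.Adj u v) : ∃ n, u ∈ stdBags G T hT c n ∧ v ∈ stdBags G T hT c n := by
  by_cases he : s(u, v) ∈ T.edgeSet
  · exact ⟨.inr ⟨s(u, v), he⟩, Or.inl (Sym2.mem_mk_left u v), Or.inl (Sym2.mem_mk_right u v)⟩
  have heG : s(u, v) ∈ G.edgeSet \ T.edgeSet := ⟨huv, he⟩
  rcases Sym2.mem_iff.mp (hc _ heG) with hcu | hcv
  · exact ⟨.inl v, Or.inr ⟨_, heG, hcu.symm, mem_fcSupport_of_mem hT (Sym2.mem_mk_right u v)⟩,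
      Or.inl rfl⟩
  · exact ⟨.inl u, Or.inl rfl,
      Or.inr ⟨_, heG, hcv.symm, mem_fcSupport_of_mem hT (Sym2.mem_mk_left u v)⟩⟩

lemma connected_induce_stdBags (hA : T.IsAcyclic) (hc : ∀ e ∈ G.edgeSet \ T.edgeSet, c e ∈ e)
    (x : V) : ((_root_.starGraph T).induce {n | x ∈ stdBags G T hT c n}).Connected := by
  have hx : (.inl x : V ⊕ T.edgeSet) ∈ {n | x ∈ stdBags G T hT c n} := Or.inl rfl
  refine induce_connected_of_patches _ hx fun {n} hn => ?_
  rcases (mem_stdBags_iff hT).mp hn with hstar | ⟨e, he, rfl, hne⟩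
  · rcases n with v | f
    · obtain rfl : x = v := hstar
      exact ⟨_, subset_rfl, hx, hn, .refl _⟩
    · refine ⟨{.inl x, .inr f}, Set.insert_subset_iff.mpr ⟨hx, Set.singleton_subset_iff.mpr hn⟩,
        by simp, by simp, ?_⟩
      exact (induce_pair_connected_of_adj (starGraph_adj_inl_inr.mpr hstar)).preconnected _ _
  · exact ⟨fcNodes hT e, fcNodes_subset_stdBags hT he, mem_fcSupport_of_mem hT (hc e he), hne,
      (connected_induce_fcNodes hT hA e).preconnected _ _⟩

end StdBags

theorem stmt6_general {V : Type} (G T : SimpleGraph V)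
    (hT : T.IsTree) (c : Sym2 V → V)
    (hc : ∀ e ∈ G.edgeSet \ T.edgeSet, c e ∈ e) :
    IsTreeDecomp G (_root_.starGraph T) (stdBags G T hT.isConnected c) ∧
      (_root_.starGraph T).IsTree := by
  have hstar : (_root_.starGraph T).IsTree :=
    ⟨connected_starGraph_of_connected hT.connected, isAcyclic_starGraph_of_isAcyclic hT.isAcyclic⟩
  exact ⟨⟨hstar, fun v => ⟨.inl v, Or.inl rfl⟩,
    fun _ _ huv => exists_mem_stdBags_of_adj hT.connected hc huv,
    connected_induce_stdBags hT.connected hT.isAcyclic hc⟩, hstar⟩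

/-- For a connected graph `G`, a spanning tree `T ≤ G`, and a
choice function `c` picking an endpoint of each non-tree edge, the standard
tree decomposition `(T*, B*)` with skeleton `T` is a tree decomposition of
`G`; in particular `T*` is a tree. -/
theorem stmt6 {V : Type} [Fintype V] (G T : SimpleGraph V) (hGconn : G.Connected)
    (hsub : T ≤ G) (hT : T.IsTree) (c : Sym2 V → V)
    (hc : ∀ e ∈ G.edgeSet \ T.edgeSet, c e ∈ e) :
    IsTreeDecomp G (_root_.starGraph T) (stdBags G T hT.isConnected c) ∧
      (_root_.starGraph T).IsTree :=
  stmt6_general G T hT c hc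
end

section
/- Let G = (V,E) be a connected finite simple graph, let T = (V,F) with F ⊆ E be a spanning tree of G, let c be a choice function with c(e) ∈ e for each e ∈ E∖F, and let (T*,B*) be the standard tree decomposition of G with skeleton T determined by c. For each tree edge f ∈ F let μ(f) be the number of non-tree edges e ∈ E∖F with f ∈ F_e, and for each vertex u ∈ V let ν(u) be the number of non-tree edges e ∈ E∖F with u ∈ C_e. Set μ = max_{f∈F} μ(f) and ν = max_{u∈V} ν(u). Then the width of (T*,B*) is at most max(μ + 1, ν). -/
open SimpleGraph

/-- The width of a tree decomposition with bags `B`. -/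
noncomputable def tdWidth {V W : Type} (B : W → Set V) : ℕ :=
  ⨆ w, ((B w).ncard - 1)

/-- If `μ` bounds, for every tree edge `f`, the number of
non-tree edges whose fundamental cycle uses `f`, and `ν` bounds, for every
vertex `u`, the number of non-tree edges whose fundamental cycle passes through
`u`, then the width of the standard tree decomposition `(T*, B*)` is at most
`max (μ + 1) ν`. -/
theorem stmt7 {V : Type} [Fintype V] (G T : SimpleGraph V) (hGconn : G.Connected)
    (hsub : T ≤ G) (hT : T.IsTree) (c : Sym2 V → V)
    (hc : ∀ e ∈ G.edgeSet \ T.edgeSet, c e ∈ e)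
    (μ ν : ℕ)
    (hμ : ∀ f : T.edgeSet,
      {e | e ∈ G.edgeSet \ T.edgeSet ∧ (f.1 : Sym2 V) ∈ fcEdges T hT.isConnected e}.ncard ≤ μ)
    (hν : ∀ u : V,
      {e | e ∈ G.edgeSet \ T.edgeSet ∧ u ∈ fcSupport T hT.isConnected e}.ncard ≤ ν) :
    tdWidth (stdBags G T hT.isConnected c) ≤ max (μ + 1) ν := by
  classical
  have hV : Nonempty V := hGconn.nonempty
  apply ciSup_le
  rintro (v | f)
  · -- vertex bag
    have h1 : {x | ∃ e ∈ G.edgeSet \ T.edgeSet, x = c e ∧ v ∈ fcSupport T hT.isConnected e}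
        = c '' {e | e ∈ G.edgeSet \ T.edgeSet ∧ v ∈ fcSupport T hT.isConnected e} := by
      ext x
      simp only [Set.mem_image, Set.mem_setOf_eq]
      constructor
      · rintro ⟨e, he, rfl, hv⟩; exact ⟨e, ⟨he, hv⟩, rfl⟩
      · rintro ⟨e, ⟨he, hv⟩, rfl⟩; exact ⟨e, he, rfl, hv⟩
    have hb : (stdBags G T hT.isConnected c (Sum.inl v)).ncard ≤ 1 + ν := by
      simp only [stdBags, Sum.elim_inl]
      refine le_trans (Set.ncard_union_le _ _) ?_
      rw [Set.ncard_singleton, h1]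
      exact Nat.add_le_add_left (le_trans (Set.ncard_image_le (Set.toFinite _)) (hν v)) 1
    have : (stdBags G T hT.isConnected c (Sum.inl v)).ncard - 1 ≤ ν := by omega
    exact le_trans this (le_max_right _ _)
  · -- edge bag
    obtain ⟨a, b, hab⟩ : ∃ a b, f.1 = s(a, b) := ⟨(Quot.exists_rep f.1).choose.1, (Quot.exists_rep f.1).choose.2, ((Quot.exists_rep f.1).choose_spec).symm⟩
    have hadj : T.Adj a b := by
      have := f.2; rw [hab] at this; exact this
    have hne : a ≠ b := hadj.ne
    have h0 : {x | x ∈ (f.1 : Sym2 V)} = {a, b} := by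
      ext x; simp [hab, Sym2.mem_iff]
    have h1 : {x | ∃ e ∈ G.edgeSet \ T.edgeSet, x = c e ∧ (f.1 : Sym2 V) ∈ fcEdges T hT.isConnected e}
        = c '' {e | e ∈ G.edgeSet \ T.edgeSet ∧ (f.1 : Sym2 V) ∈ fcEdges T hT.isConnected e} := by
      ext x
      simp only [Set.mem_image, Set.mem_setOf_eq]
      constructor
      · rintro ⟨e, he, rfl, hv⟩; exact ⟨e, ⟨he, hv⟩, rfl⟩
      · rintro ⟨e, ⟨he, hv⟩, rfl⟩; exact ⟨e, he, rfl, hv⟩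
    have hb : (stdBags G T hT.isConnected c (Sum.inr f)).ncard ≤ 2 + μ := by
      simp only [stdBags, Sum.elim_inr]
      refine le_trans (Set.ncard_union_le _ _) ?_
      rw [h0, Set.ncard_pair hne, h1]
      exact Nat.add_le_add_left (le_trans (Set.ncard_image_le (Set.toFinite _)) (hμ f)) 2
    have : (stdBags G T hT.isConnected c (Sum.inr f)).ncard - 1 ≤ μ + 1 := by omega
    exact le_trans this (le_max_left _ _)
end

section
/- Let G be a finite simple graph on vertex set V, let h : V → ℕ be a height function on G, let ℓ ∈ ℕ, and let W be a walk in G from a vertex s1 to a vertex s2 with h(s1) ≤ ℓ and h(s2) ≤ ℓ whose length is at most (ℓ − h(s1)) + (ℓ − h(s2)). Then W visits no vertex x with h(x) > ℓ, and W visits at most one vertex x with h(x) = ℓ. -/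
open SimpleGraph

private lemma aux_bound {V : Type} {G : SimpleGraph V} {h : V → ℕ}
    (hheight : ∀ u v : V, G.Adj u v → h u ≤ h v + 1 ∧ h v ≤ h u + 1)
    {s1 s2 : V} (p : G.Walk s1 s2) (i : ℕ) :
    h (p.getVert i) ≤ h s1 + i := by
  induction i with
  | zero => simp
  | succ n ih =>
    by_cases hn : n < p.length
    · have := (hheight _ _ (p.adj_getVert_succ hn)).2
      omega
    · rw [p.getVert_of_length_le (by omega), ← p.getVert_of_length_le (le_of_not_gt hn)]
      omega

/-- Let `h` be a height function on `G` (heights of adjacent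
vertices differ by at most 1). If a walk from `s1` to `s2` with `h s1 ≤ ℓ` and
`h s2 ≤ ℓ` has length at most `(ℓ - h s1) + (ℓ - h s2)`, then it visits no
vertex of height greater than `ℓ` and at most one vertex of height exactly `ℓ`. -/
theorem stmt10 {V : Type} (G : SimpleGraph V) (h : V → ℕ)
    (hheight : ∀ u v : V, G.Adj u v → h u ≤ h v + 1 ∧ h v ≤ h u + 1)
    (ℓ : ℕ) {s1 s2 : V} (p : G.Walk s1 s2) (h1 : h s1 ≤ ℓ) (h2 : h s2 ≤ ℓ)
    (hlen : p.length ≤ (ℓ - h s1) + (ℓ - h s2)) :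
    (∀ x ∈ p.support, h x ≤ ℓ) ∧ {x | x ∈ p.support ∧ h x = ℓ}.ncard ≤ 1 := by
  have key : ∀ i ≤ p.length, h (p.getVert i) ≤ h s1 + i ∧
      h (p.getVert i) ≤ h s2 + (p.length - i) := by
    intro i hi
    refine ⟨aux_bound hheight p i, ?_⟩
    have := aux_bound hheight p.reverse (p.length - i)
    rw [p.getVert_reverse] at this
    have hii : p.length - (p.length - i) = i := by omega
    rwa [hii] at this
  constructor
  · intro x hx
    obtain ⟨i, rfl, hi⟩ := SimpleGraph.Walk.mem_support_iff_exists_getVert.mp hx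
    have := key i hi
    omega
  · have hfin : {x | x ∈ p.support ∧ h x = ℓ}.Finite :=
      (p.support.finite_toSet).subset (fun x hx => hx.1)
    rw [Set.ncard_le_one hfin]
    rintro a ⟨ha, hal⟩ b ⟨hb, hbl⟩
    by_contra hab
    obtain ⟨i, rfl, hi⟩ := SimpleGraph.Walk.mem_support_iff_exists_getVert.mp ha
    obtain ⟨j, rfl, hj⟩ := SimpleGraph.Walk.mem_support_iff_exists_getVert.mp hb
    have hij : i ≠ j := fun e => hab (by rw [e])
    have k1 := key i hi
    have k2 := key j hj
    omega
end
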